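/- arXiv:2012.10719 — 2 statements merged into one kernel-verified Lean document; each statement's English description precedes it below -/
import Mathlib

section
/- Let p > 2, and let W : (0,1)×ℝ×ℝ → ℝ be measurable in x, continuous in (u,U), and satisfy the coercivity bound C₀(|U|^p − 1) ≤ W(x,u,U) for some C₀ > 0. Consider E(u) = ∫₀¹∫₀¹ W(x,u(x),Du(x,X)) dX dx over the class A of functions u ∈ L^p(0,1) with Du ∈ L^p((0,1)²) and (continuous representative satisfying) u(0)=0, u(1)=0. If E is finite for some u ∈ A, then E attains its minimum on A. -/
/-!
Direct method. Coercivity bounds `‖Du‖_{L^p}` along a minimizing sequence. For `p > 2` this gives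
a uniform Hölder bound: the averages of `u` over two sets `I`, `J` differ by at most
`dist · ‖Du‖_p · (|I| |J|)^(-1/p)`, and summing these increments over dyadic intervals shrinking to
a point gives `|u x - u y| ≤ C ‖Du‖_p |x - y|^(1 - 2/p)`. With `u 0 = 0`, Arzelà–Ascoli yields a
subsequence of continuous representatives converging uniformly on `[0, 1]`; then `Du` converges
a.e., and Fatou's lemma together with the continuity of `W` in `(u, U)` gives both the lower
semicontinuity of `E` and the `L^p` bound on `Du` of the limit.
-/

open MeasureTheory Set Real Filter Topology
open scoped ENNReal NNReal

/-- Lebesgue measure restricted to the unit interval `(0,1)`. -/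
noncomputable def muI : Measure ℝ := volume.restrict (Set.Ioo 0 1)

/-- Product measure on the unit square `(0,1)²`. -/
noncomputable def muS : Measure (ℝ × ℝ) := muI.prod muI

/-- Nonlocal difference quotient `Du(x,X) = (u X - u x)/(X - x)`. -/
noncomputable def Du (u : ℝ → ℝ) : ℝ × ℝ → ℝ := fun p => (u p.2 - u p.1) / (p.2 - p.1)

instance : IsProbabilityMeasure muI := ⟨by simp [muI]⟩

lemma abs_sub_eq_abs_Du_mul (u : ℝ → ℝ) (z : ℝ × ℝ) :
    |u z.2 - u z.1| = |Du u z| * |z.2 - z.1| := by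
  rcases eq_or_ne z.2 z.1 with h | h
  · simp [h]
  · rw [Du, abs_div, div_mul_cancel₀ _ (abs_ne_zero.2 (sub_ne_zero.2 h))]

section ProductMeasure

variable {μ ν : Measure ℝ}

lemma aemeasurable_Du {u : ℝ → ℝ} (hμ : AEMeasurable u μ) (hν : AEMeasurable u ν) :
    AEMeasurable (Du u) (μ.prod ν) :=
  (hν.comp_snd.sub hμ.comp_fst).div (measurable_snd.sub measurable_fst).aemeasurable

lemma Du_ae_eq {u v : ℝ → ℝ} (hμ : u =ᵐ[μ] v) (hν : u =ᵐ[ν] v) :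
    Du u =ᵐ[μ.prod ν] Du v := by
  filter_upwards [Measure.quasiMeasurePreserving_fst.ae hμ,
    Measure.quasiMeasurePreserving_snd.ae hν] with z h₁ h₂
  simp only [Du, h₁, h₂]

lemma tendsto_Du_ae {ι : Type*} {l : Filter ι} {u : ι → ℝ → ℝ} {w : ℝ → ℝ}
    (hμ : ∀ᵐ x ∂μ, Tendsto (fun n => u n x) l (𝓝 (w x)))
    (hν : ∀ᵐ x ∂ν, Tendsto (fun n => u n x) l (𝓝 (w x))) :
    ∀ᵐ z ∂μ.prod ν, Tendsto (fun n => Du (u n) z) l (𝓝 (Du w z)) := by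
  filter_upwards [Measure.quasiMeasurePreserving_fst.ae hμ,
    Measure.quasiMeasurePreserving_snd.ae hν] with z h₁ h₂
  exact (h₂.sub h₁).div_const _

end ProductMeasure

lemma setIntegral_setIntegral_sub {v : ℝ → ℝ} {I J : Set ℝ} (hI : volume I ≠ ∞)
    (hJ : volume J ≠ ∞) (hvI : IntegrableOn v I) (hvJ : IntegrableOn v J) :
    ∫ x in I, ∫ y in J, (v x - v y) =
      volume.real J * (∫ x in I, v x) - volume.real I * ∫ y in J, v y := by
  have inner : ∀ x, ∫ y in J, (v x - v y) = volume.real J * v x - ∫ y in J, v y := fun x => by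
    rw [integral_sub (integrableOn_const (C := v x) hJ) hvJ, setIntegral_const, smul_eq_mul]
  simp_rw [inner]
  rw [integral_sub (hvI.const_mul _) (integrableOn_const (C := ∫ y in J, v y) hI),
    integral_const_mul, setIntegral_const, smul_eq_mul]

lemma enorm_setIntegral_setIntegral_sub_le {p : ℝ} (hp : 1 ≤ p) {v : ℝ → ℝ} {I J : Set ℝ}
    (hI : MeasurableSet I) (hJ : MeasurableSet J) (hvI : IntegrableOn v I)
    (hvJ : IntegrableOn v J) {D : ℝ} (hD : ∀ x ∈ I, ∀ y ∈ J, |y - x| ≤ D) {K : ℝ≥0∞}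
    (hK : eLpNorm (Du v) (ENNReal.ofReal p) ((volume.restrict I).prod (volume.restrict J)) ≤ K) :
    ‖∫ x in I, ∫ y in J, (v x - v y)‖ₑ ≤
      ENNReal.ofReal D * (K * (volume I * volume J) ^ (1 - 1 / p)) := by
  set ρ := (volume.restrict I).prod (volume.restrict J)
  have hmem : ∀ᵐ z ∂ρ, z.1 ∈ I ∧ z.2 ∈ J := by
    filter_upwards [Measure.quasiMeasurePreserving_fst.ae (ae_restrict_mem hI),
      Measure.quasiMeasurePreserving_snd.ae (ae_restrict_mem hJ)] with z h₁ h₂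
    exact ⟨h₁, h₂⟩
  calc ‖∫ x in I, ∫ y in J, (v x - v y)‖ₑ
      ≤ ∫⁻ x in I, ∫⁻ y in J, ‖v x - v y‖ₑ :=
        (enorm_integral_le_lintegral_enorm _).trans
          (lintegral_mono fun x => enorm_integral_le_lintegral_enorm _)
    _ = ∫⁻ z, ‖v z.1 - v z.2‖ₑ ∂ρ :=
        (lintegral_prod _ (hvI.aemeasurable.comp_fst.sub hvJ.aemeasurable.comp_snd).enorm).symm
    _ ≤ ∫⁻ z, ENNReal.ofReal D * ‖Du v z‖ₑ ∂ρ := by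
        refine lintegral_mono_ae ?_
        filter_upwards [hmem] with z hz
        rw [Real.enorm_eq_ofReal_abs, Real.enorm_eq_ofReal_abs, mul_comm, ← ENNReal.ofReal_mul
          (abs_nonneg _), abs_sub_comm, abs_sub_eq_abs_Du_mul]
        exact ENNReal.ofReal_le_ofReal (by gcongr; exact hD _ hz.1 _ hz.2)
    _ = ENNReal.ofReal D * eLpNorm (Du v) 1 ρ := by
        rw [lintegral_const_mul' _ _ ENNReal.ofReal_ne_top, eLpNorm_one_eq_lintegral_enorm]
    _ ≤ ENNReal.ofReal D * (K * (volume I * volume J) ^ (1 - 1 / p)) := by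
        gcongr
        refine (eLpNorm_le_eLpNorm_mul_rpow_measure_univ (ENNReal.one_le_ofReal.2 hp)
          (aemeasurable_Du hvI.aemeasurable hvJ.aemeasurable).aestronglyMeasurable).trans ?_
        rw [← univ_prod_univ, Measure.prod_prod, Measure.restrict_apply_univ,
          Measure.restrict_apply_univ, ENNReal.toReal_one, ENNReal.toReal_ofReal (by linarith),
          div_one]
        gcongr

/-- Both averages are averages over `I × J`, where `|v y - v x| ≤ D |Du v (x, y)|`; Hölder's
inequality on `I × J` does the rest. -/
lemma abs_setAverage_sub_setAverage_le {p : ℝ} (hp : 1 ≤ p) {v : ℝ → ℝ} {I J : Set ℝ}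
    (hI : MeasurableSet I) (hJ : MeasurableSet J) (hI₀ : volume I ≠ 0) (hJ₀ : volume J ≠ 0)
    (hIfin : volume I ≠ ∞) (hJfin : volume J ≠ ∞) (hvI : IntegrableOn v I)
    (hvJ : IntegrableOn v J) {D : ℝ} (hD : ∀ x ∈ I, ∀ y ∈ J, |y - x| ≤ D) {K : ℝ≥0}
    (hK : eLpNorm (Du v) (ENNReal.ofReal p) ((volume.restrict I).prod (volume.restrict J)) ≤ K) :
    |(⨍ x in I, v x) - ⨍ y in J, v y| ≤ D * K * (volume.real I * volume.real J) ^ (-(1 / p)) := by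
  set V := volume.real I * volume.real J
  have hIpos : 0 < volume.real I := ENNReal.toReal_pos hI₀ hIfin
  have hJpos : 0 < volume.real J := ENNReal.toReal_pos hJ₀ hJfin
  have hV : 0 < V := mul_pos hIpos hJpos
  have hD₀ : 0 ≤ D := by
    obtain ⟨x, hx⟩ := nonempty_of_measure_ne_zero hI₀
    obtain ⟨y, hy⟩ := nonempty_of_measure_ne_zero hJ₀
    exact (abs_nonneg _).trans (hD x hx y hy)
  have hbound : |∫ x in I, ∫ y in J, (v x - v y)| ≤ D * K * V ^ (1 - 1 / p) := by
    have := ENNReal.toReal_mono (by finiteness)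
      (enorm_setIntegral_setIntegral_sub_le hp hI hJ hvI hvJ hD hK)
    simpa [ENNReal.toReal_mul, ← ENNReal.toReal_rpow, hD₀, V, mul_assoc, measureReal_def] using this
  have havg : (⨍ x in I, v x) - ⨍ y in J, v y = V⁻¹ * ∫ x in I, ∫ y in J, (v x - v y) := by
    rw [setAverage_eq, setAverage_eq, setIntegral_setIntegral_sub hIfin hJfin hvI hvJ,
      smul_eq_mul, smul_eq_mul]
    field_simp [V]
    ring
  have hVpow : V⁻¹ * V ^ (1 - 1 / p) = V ^ (-(1 / p)) := by
    rw [sub_eq_add_neg, Real.rpow_add hV, Real.rpow_one, inv_mul_cancel_left₀ hV.ne']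
  rw [havg, abs_mul, abs_inv, abs_of_pos hV, ← hVpow]
  calc V⁻¹ * |∫ x in I, ∫ y in J, (v x - v y)| ≤ V⁻¹ * (D * K * V ^ (1 - 1 / p)) := by gcongr
    _ = D * K * (V⁻¹ * V ^ (1 - 1 / p)) := by ring

lemma tendsto_setAverage_of_continuousWithinAt {α ι : Type*} [PseudoMetricSpace α]
    [MeasurableSpace α] {μ : Measure α} {l : Filter ι} {v : α → ℝ} {s : Set α} {t : α}
    (hv : ContinuousWithinAt v s t) {S : ι → Set α} (hS : ∀ i, MeasurableSet (S i))
    (hSs : ∀ i, S i ⊆ s) (hS₀ : ∀ i, μ (S i) ≠ 0) (hSfin : ∀ i, μ (S i) ≠ ∞)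
    (hvS : ∀ i, IntegrableOn v (S i) μ) (hSt : ∀ δ > 0, ∀ᶠ i in l, S i ⊆ Metric.ball t δ) :
    Tendsto (fun i => ⨍ x in S i, v x ∂μ) l (𝓝 (v t)) := by
  refine Metric.tendsto_nhds.2 fun ε hε => ?_
  obtain ⟨δ, hδ, hvδ⟩ := Metric.continuousWithinAt_iff.1 hv (ε / 2) (half_pos hε)
  filter_upwards [hSt δ hδ] with i hi
  have hmem : (⨍ x in S i, v x ∂μ) ∈ Metric.closedBall (v t) (ε / 2) :=
    (convex_closedBall _ _).set_average_mem Metric.isClosed_closedBall (hS₀ i) (hSfin i)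
      (ae_restrict_of_forall_mem (hS i) fun x hx => (hvδ (hSs i hx) (hi hx)).le) (hvS i)
  exact hmem.trans_lt (half_lt_self hε)

lemma dyadic_rpow_eq (p : ℝ) {r : ℝ} (hr : 0 < r) (k : ℕ) :
    2 * (r / 2 ^ k) * (r / 2 ^ k * (r / 2 ^ (k + 1))) ^ (-(1 / p)) =
      2 * 2 ^ (1 / p) * r ^ (1 - 2 / p) * ((2 : ℝ) ^ (2 / p - 1)) ^ k := by
  refine Real.log_injOn_pos (Set.mem_Ioi.2 (by positivity)) (Set.mem_Ioi.2 (by positivity)) ?_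
  simp (disch := positivity) only [Real.log_mul, Real.log_div, Real.log_rpow, Real.log_pow]
  push_cast
  ring

-- `2 · 2^(1/p) · ∑ₖ (2^(2/p - 1))^k`, the dyadic sum of `abs_sub_setAverage_le`.
noncomputable def morreyConst (p : ℝ) : ℝ := 2 * 2 ^ (1 / p) / (1 - 2 ^ (2 / p - 1))

lemma one_sub_two_div_pos {p : ℝ} (hp : 2 < p) : 0 < 1 - 2 / p := by
  linarith [(div_lt_one (by linarith : (0 : ℝ) < p)).2 hp]

lemma two_rpow_two_div_sub_one_lt_one {p : ℝ} (hp : 2 < p) : (2 : ℝ) ^ (2 / p - 1) < 1 :=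
  Real.rpow_lt_one_of_one_lt_of_neg one_lt_two (by linarith [one_sub_two_div_pos hp])

lemma morreyConst_nonneg {p : ℝ} (hp : 2 < p) : 0 ≤ morreyConst p :=
  div_nonneg (by positivity) (by linarith [two_rpow_two_div_sub_one_lt_one hp])

lemma eLpNorm_restrict_prod_le_muS {f : ℝ × ℝ → ℝ} {q : ℝ≥0∞} {I J : Set ℝ}
    (hI : I ⊆ Ioo 0 1) (hJ : J ⊆ Ioo 0 1) :
    eLpNorm f q ((volume.restrict I).prod (volume.restrict J)) ≤ eLpNorm f q muS :=
  eLpNorm_mono_measure _ (Measure.prod_mono (Measure.restrict_mono hI le_rfl)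
    (Measure.restrict_mono hJ le_rfl))

/-- By `abs_setAverage_sub_setAverage_le`, the averages over consecutive `S k` differ by a
geometric sequence of ratio `2^(2/p - 1)`, which is `< 1` because `p > 2`. -/
lemma abs_sub_setAverage_le {p : ℝ} (hp : 2 < p) {v : ℝ → ℝ} (hv : ContinuousOn v (Icc 0 1))
    {K : ℝ≥0} (hK : eLpNorm (Du v) (ENNReal.ofReal p) muS ≤ K) {t r : ℝ} (ht : t ∈ Icc 0 1)
    (hr : 0 < r) {S : ℕ → Set ℝ} (hS : ∀ k, MeasurableSet (S k)) (hS01 : ∀ k, S k ⊆ Ioo 0 1)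
    (hSvol : ∀ k, volume (S k) = ENNReal.ofReal (r / 2 ^ k))
    (hSt : ∀ k, ∀ x ∈ S k, |x - t| ≤ r / 2 ^ k) :
    |v t - ⨍ x in S 0, v x| ≤ morreyConst p * K * r ^ (1 - 2 / p) := by
  have hS₀ : ∀ k, volume (S k) ≠ 0 := fun k => by simp [hSvol, hr]
  have hSfin : ∀ k, volume (S k) ≠ ∞ := fun k => by simp [hSvol]
  have hSreal : ∀ k, volume.real (S k) = r / 2 ^ k := fun k => by
    rw [measureReal_def, hSvol, ENNReal.toReal_ofReal (by positivity)]
  have hvS : ∀ k, IntegrableOn v (S k) :=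
    fun k => (hv.integrableOn_Icc.mono_set ((hS01 k).trans Ioo_subset_Icc_self))
  have hstep : ∀ k, dist (⨍ x in S k, v x) (⨍ x in S (k + 1), v x) ≤
      (2 * 2 ^ (1 / p) * K * r ^ (1 - 2 / p)) * ((2 : ℝ) ^ (2 / p - 1)) ^ k := by
    intro k
    have hD : ∀ x ∈ S k, ∀ y ∈ S (k + 1), |y - x| ≤ 2 * (r / 2 ^ k) := by
      intro x hx y hy
      have h₁ := hSt k x hx
      have h₂ := hSt (k + 1) y hy
      have h₃ : r / 2 ^ (k + 1) ≤ r / 2 ^ k := by gcongr <;> simp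
      calc |y - x| ≤ |y - t| + |t - x| := abs_sub_le _ _ _
        _ ≤ 2 * (r / 2 ^ k) := by rw [abs_sub_comm t x]; linarith
    have := abs_setAverage_sub_setAverage_le (by linarith) (hS k) (hS (k + 1)) (hS₀ k)
      (hS₀ (k + 1)) (hSfin k) (hSfin (k + 1)) (hvS k) (hvS (k + 1)) hD
      ((eLpNorm_restrict_prod_le_muS (hS01 k) (hS01 (k + 1))).trans hK)
    rw [hSreal, hSreal, mul_right_comm, dyadic_rpow_eq p hr k] at this
    rw [Real.dist_eq]
    linarith
  have hlim : Tendsto (fun k => ⨍ x in S k, v x) atTop (𝓝 (v t)) := by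
    refine tendsto_setAverage_of_continuousWithinAt (hv t ht) hS
      (fun k => (hS01 k).trans Ioo_subset_Icc_self) hS₀ hSfin hvS fun δ hδ => ?_
    have hr0 : Tendsto (fun k : ℕ => r / 2 ^ k) atTop (𝓝 0) :=
      tendsto_const_nhds.div_atTop (tendsto_pow_atTop_atTop_of_one_lt one_lt_two)
    filter_upwards [(tendsto_order.1 hr0).2 δ hδ] with k hk x hx
    exact (hSt k x hx).trans_lt hk
  have := dist_le_of_le_geometric_of_tendsto₀ _ _ (two_rpow_two_div_sub_one_lt_one hp) hstep hlim
  rw [dist_comm, Real.dist_eq] at this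
  refine this.trans_eq ?_
  rw [morreyConst]
  ring

/-- Morrey's inequality for the nonlocal gradient: the two dyadic families `(x, x + r/2^k)` and
`(x + r - r/2^k, x + r)` start from the same interval. -/
lemma abs_sub_le_morreyConst {p : ℝ} (hp : 2 < p) {v : ℝ → ℝ} (hv : ContinuousOn v (Icc 0 1))
    {K : ℝ≥0} (hK : eLpNorm (Du v) (ENNReal.ofReal p) muS ≤ K) {x y : ℝ} (hx : x ∈ Icc 0 1)
    (hy : y ∈ Icc 0 1) :
    |v x - v y| ≤ 2 * morreyConst p * K * |x - y| ^ (1 - 2 / p) := by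
  wlog hxy : x ≤ y generalizing x y
  · rw [abs_sub_comm, abs_sub_comm x]
    exact this hy hx (le_of_not_ge hxy)
  rcases hxy.eq_or_lt with rfl | hlt
  · simp [Real.zero_rpow (one_sub_two_div_pos hp).ne']
  obtain ⟨r, hr, rfl⟩ : ∃ r, 0 < r ∧ y = x + r := ⟨y - x, sub_pos.2 hlt, by ring⟩
  have hdyadic : ∀ k : ℕ, r / 2 ^ k ≤ r := fun k => div_le_self hr.le (one_le_pow₀ one_le_two)
  have hright := abs_sub_setAverage_le hp hv hK hx hr (S := fun k => Ioo x (x + r / 2 ^ k))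
    (fun k => measurableSet_Ioo)
    (fun k => Ioo_subset_Ioo hx.1 (by linarith [hdyadic k, hy.2]))
    (fun k => by simp [Real.volume_Ioo])
    (fun k z hz => by rw [abs_of_pos (sub_pos.2 hz.1)]; linarith [hz.2])
  have hleft := abs_sub_setAverage_le hp hv hK hy hr (S := fun k => Ioo (x + r - r / 2 ^ k) (x + r))
    (fun k => measurableSet_Ioo)
    (fun k => Ioo_subset_Ioo (by linarith [hdyadic k, hx.1]) hy.2)
    (fun k => by simp [Real.volume_Ioo])
    (fun k z hz => by rw [abs_of_neg (sub_neg.2 hz.2)]; linarith [hz.1])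
  simp only [pow_zero, div_one, add_sub_cancel_right] at hright hleft
  rw [sub_add_cancel_left, abs_neg, abs_of_pos hr]
  set a := ⨍ z in Ioo x (x + r), v z
  calc |v x - v (x + r)| ≤ |v x - a| + |a - v (x + r)| := abs_sub_le _ _ _
    _ ≤ 2 * morreyConst p * K * r ^ (1 - 2 / p) := by rw [abs_sub_comm a]; linarith

lemma abs_le_of_eLpNorm_Du_le {p : ℝ} (hp : 2 < p) {v : ℝ → ℝ} (hv : ContinuousOn v (Icc 0 1))
    (hv₀ : v 0 = 0) {K : ℝ≥0} (hK : eLpNorm (Du v) (ENNReal.ofReal p) muS ≤ K) {x : ℝ}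
    (hx : x ∈ Icc 0 1) :
    |v x| ≤ 2 * morreyConst p * K := by
  have h := abs_sub_le_morreyConst hp hv hK hx (left_mem_Icc.2 zero_le_one)
  rw [hv₀, sub_zero, sub_zero, abs_of_nonneg hx.1] at h
  have hx1 : x ^ (1 - 2 / p) ≤ 1 := Real.rpow_le_one hx.1 hx.2 (one_sub_two_div_pos hp).le
  have := morreyConst_nonneg hp
  calc |v x| ≤ 2 * morreyConst p * K * x ^ (1 - 2 / p) := h
    _ ≤ 2 * morreyConst p * K * 1 := by gcongr
    _ = 2 * morreyConst p * K := mul_one _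

lemma exists_subseq_tendsto_of_holder {f : ℕ → ℝ → ℝ} {B C α : ℝ} (hα : 0 < α)
    (hf : ∀ n, ContinuousOn (f n) (Icc 0 1)) (hB : ∀ n, ∀ x ∈ Icc (0 : ℝ) 1, |f n x| ≤ B)
    (hC : ∀ n, ∀ x ∈ Icc (0 : ℝ) 1, ∀ y ∈ Icc (0 : ℝ) 1, |f n x - f n y| ≤ C * |x - y| ^ α) :
    ∃ w : ℝ → ℝ, Continuous w ∧ ∃ φ : ℕ → ℕ, StrictMono φ ∧
      ∀ x ∈ Icc (0 : ℝ) 1, Tendsto (fun n => f (φ n) x) atTop (𝓝 (w x)) := by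
  let F : ℕ → BoundedContinuousFunction (Icc (0 : ℝ) 1) ℝ := fun n =>
    .ofNormedAddCommGroup ((Icc 0 1).domRestrict (f n)) (hf n).domRestrict B fun t => hB n t t.2
  have hmod : Tendsto (fun t : ℝ => C * |t| ^ α) (𝓝 0) (𝓝 0) := by
    simpa [Real.zero_rpow hα.ne'] using
      ((continuous_abs.rpow_const fun _ => Or.inr hα.le).const_mul C).tendsto 0
  have hequi : Equicontinuous ((↑) : range F → Icc (0 : ℝ) 1 → ℝ) := by
    refine Metric.equicontinuous_of_continuity_modulus _ hmod _ ?_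
    rintro x y ⟨_, n, rfl⟩
    rw [Subtype.dist_eq, Real.dist_eq, Real.dist_eq, abs_abs]
    exact hC n x x.2 y y.2
  have hcomp : IsCompact (closure (range F)) :=
    BoundedContinuousFunction.arzela_ascoli (Icc (-B) B) isCompact_Icc _
      (by rintro _ t ⟨n, rfl⟩; exact abs_le.1 (hB n t t.2)) hequi
  obtain ⟨g, -, φ, hφ, hconv⟩ := hcomp.tendsto_subseq fun n => subset_closure (mem_range_self n)
  refine ⟨fun x => g (projIcc 0 1 zero_le_one x), g.continuous.comp continuous_projIcc, φ, hφ,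
    fun x hx => ?_⟩
  simp only [projIcc_of_mem _ hx]
  exact ((continuous_eval_const (⟨x, hx⟩ : Icc (0 : ℝ) 1)).tendsto g).comp hconv

def admissible (p : ℝ) : Set (ℝ → ℝ) :=
  {u | MemLp u (ENNReal.ofReal p) muI ∧ MemLp (Du u) (ENNReal.ofReal p) muS ∧
    ∃ v : ℝ → ℝ, ContinuousOn v (Icc 0 1) ∧ (∀ᵐ x ∂muI, v x = u x) ∧ v 0 = 0 ∧ v 1 = 0}

lemma mem_admissible_of_continuous {p : ℝ} {w : ℝ → ℝ} (hw : Continuous w) (hw₀ : w 0 = 0)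
    (hw₁ : w 1 = 0) (hDu : eLpNorm (Du w) (ENNReal.ofReal p) muS < ∞) : w ∈ admissible p := by
  obtain ⟨B, hB⟩ := isCompact_Icc.exists_bound_of_continuousOn (hw.continuousOn (s := Icc 0 1))
  refine ⟨MemLp.of_bound hw.aestronglyMeasurable B ?_,
    ⟨(aemeasurable_Du hw.aemeasurable hw.aemeasurable).aestronglyMeasurable, hDu⟩,
    w, hw.continuousOn, .of_forall fun _ => rfl, hw₀, hw₁⟩
  filter_upwards [ae_restrict_mem measurableSet_Ioo] with x hx
  exact hB x (Ioo_subset_Icc_self hx)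

lemma exists_subseq_tendsto_ae_mem_admissible {p : ℝ} (hp : 2 < p) {u : ℕ → ℝ → ℝ}
    (hu : ∀ n, u n ∈ admissible p) {K : ℝ≥0}
    (hK : ∀ n, eLpNorm (Du (u n)) (ENNReal.ofReal p) muS ≤ K) :
    ∃ w ∈ admissible p, ∃ φ : ℕ → ℕ, StrictMono φ ∧
      ∀ᵐ x ∂muI, Tendsto (fun n => u (φ n) x) atTop (𝓝 (w x)) := by
  choose v hv hvu hv₀ hv₁ using fun n => (hu n).2.2
  have hDu : ∀ n, Du (v n) =ᵐ[muS] Du (u n) := fun n => Du_ae_eq (hvu n) (hvu n)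
  have hKv : ∀ n, eLpNorm (Du (v n)) (ENNReal.ofReal p) muS ≤ K :=
    fun n => (eLpNorm_congr_ae (hDu n)).trans_le (hK n)
  obtain ⟨w, hw, φ, hφ, hvw⟩ := exists_subseq_tendsto_of_holder (one_sub_two_div_pos hp) hv
    (fun n x hx => abs_le_of_eLpNorm_Du_le hp (hv n) (hv₀ n) (hKv n) hx)
    fun n x hx y hy => abs_sub_le_morreyConst hp (hv n) (hKv n) hx hy
  have hvw' : ∀ᵐ x ∂muI, Tendsto (fun n => v (φ n) x) atTop (𝓝 (w x)) := by
    filter_upwards [ae_restrict_mem measurableSet_Ioo] with x hx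
    exact hvw x (Ioo_subset_Icc_self hx)
  have hDuw : eLpNorm (Du w) (ENNReal.ofReal p) muS ≤ K :=
    Lp.eLpNorm_le_of_ae_tendsto (.of_forall fun n => hKv (φ n))
      (fun n => (hu (φ n)).2.1.aestronglyMeasurable.congr (hDu (φ n)).symm)
      (tendsto_Du_ae hvw' hvw')
  refine ⟨w, mem_admissible_of_continuous hw ?_ ?_ (hDuw.trans_lt ENNReal.coe_lt_top), φ, hφ, ?_⟩
  · exact tendsto_nhds_unique (hvw 0 (left_mem_Icc.2 zero_le_one)) (by simp [hv₀])
  · exact tendsto_nhds_unique (hvw 1 (right_mem_Icc.2 zero_le_one)) (by simp [hv₁])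
  · filter_upwards [ae_all_iff.2 hvu, hvw'] with x hx hvx
    simpa only [hx] using hvx

noncomputable def nonlocalEnergy (W : ℝ → ℝ → ℝ → ℝ) (c : ℝ) (μ : Measure (ℝ × ℝ))
    (u : ℝ → ℝ) : ℝ≥0∞ :=
  ∫⁻ z, ENNReal.ofReal (W z.1 (u z.1) (Du u z) + c) ∂μ

lemma eLpNorm_Du_le_nonlocalEnergy {W : ℝ → ℝ → ℝ → ℝ} {p C₀ : ℝ} (hp : 0 < p) (hC₀ : 0 < C₀)
    (hcoer : ∀ x a b : ℝ, C₀ * (|b| ^ p - 1) ≤ W x a b) (μ : Measure (ℝ × ℝ)) (u : ℝ → ℝ) :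
    eLpNorm (Du u) (ENNReal.ofReal p) μ ≤
      (nonlocalEnergy W C₀ μ u / ENNReal.ofReal C₀) ^ (1 / p) := by
  rw [eLpNorm_eq_lintegral_rpow_enorm_toReal (by simpa using hp) ENNReal.ofReal_ne_top,
    ENNReal.toReal_ofReal hp.le]
  gcongr
  rw [ENNReal.le_div_iff_mul_le (Or.inl (by simpa using hC₀)) (Or.inl ENNReal.ofReal_ne_top),
    mul_comm, ← lintegral_const_mul' _ _ ENNReal.ofReal_ne_top, nonlocalEnergy]
  refine lintegral_mono fun z => ?_
  rw [Real.enorm_eq_ofReal_abs, ENNReal.ofReal_rpow_of_nonneg (abs_nonneg _) hp.le,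
    ← ENNReal.ofReal_mul hC₀.le]
  exact ENNReal.ofReal_le_ofReal (by linarith [hcoer z.1 (u z.1) (Du u z)])

lemma nonlocalEnergy_le_liminf {W : ℝ → ℝ → ℝ → ℝ} (hWx : ∀ a b : ℝ, Measurable fun x => W x a b)
    (hWc : ∀ x : ℝ, Continuous fun q : ℝ × ℝ => W x q.1 q.2) (c : ℝ) {μ : Measure ℝ}
    {u : ℕ → ℝ → ℝ} {w : ℝ → ℝ} (hu : ∀ n, AEMeasurable (u n) μ)
    (hlim : ∀ᵐ x ∂μ, Tendsto (fun n => u n x) atTop (𝓝 (w x))) :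
    nonlocalEnergy W c (μ.prod μ) w ≤
      liminf (fun n => nonlocalEnergy W c (μ.prod μ) (u n)) atTop := by
  have hW : Measurable (Function.uncurry fun (q : ℝ × ℝ) (x : ℝ) => W x q.1 q.2) :=
    measurable_uncurry_of_continuous_of_measurable hWc fun q => hWx q.1 q.2
  have hmeas : ∀ n, AEMeasurable
      (fun z : ℝ × ℝ => ENNReal.ofReal (W z.1 (u n z.1) (Du (u n) z) + c)) (μ.prod μ) :=
    fun n => (ENNReal.measurable_ofReal.comp_aemeasurable
      ((hW.comp_aemeasurable (((hu n).comp_fst.prodMk (aemeasurable_Du (hu n) (hu n))).prodMk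
        measurable_fst.aemeasurable)).add_const c))
  refine le_trans (le_of_eq (lintegral_congr_ae ?_)) (lintegral_liminf_le' hmeas)
  filter_upwards [Measure.quasiMeasurePreserving_fst.ae hlim, tendsto_Du_ae hlim hlim] with z h₁ h₂
  refine (Tendsto.liminf_eq ?_).symm
  exact (ENNReal.continuous_ofReal.tendsto _).comp
    ((((hWc z.1).tendsto _).comp (h₁.prodMk_nhds h₂)).add_const c)

lemma exists_seq_mem_tendsto_biInf {α : Type*} {A : Set α} {E : α → ℝ≥0∞}
    (h : ∃ a ∈ A, E a < ∞) :
    ∃ u : ℕ → α, (∀ n, u n ∈ A) ∧ (∀ n, E (u n) ≤ (⨅ a ∈ A, E a) + 1) ∧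
      Tendsto (fun n => E (u n)) atTop (𝓝 (⨅ a ∈ A, E a)) := by
  obtain ⟨a₀, ha₀, hE₀⟩ := h
  set m := ⨅ a ∈ A, E a
  have hm : m ≠ ∞ := ne_top_of_le_ne_top hE₀.ne (iInf₂_le a₀ ha₀)
  have hex : ∀ n : ℕ, ∃ a ∈ A, E a < m + ((n : ℝ≥0∞) + 1)⁻¹ := fun n => by
    simpa [m, iInf_lt_iff] using ENNReal.lt_add_right hm (by simp)
  choose u huA huE using hex
  have hε : Tendsto (fun n : ℕ => ((n : ℝ≥0∞) + 1)⁻¹) atTop (𝓝 0) := by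
    simpa [Function.comp_def] using ENNReal.tendsto_inv_nat_nhds_zero.comp (tendsto_add_atTop_nat 1)
  refine ⟨u, huA, fun n => (huE n).le.trans (by gcongr; simp), ?_⟩
  refine tendsto_of_tendsto_of_tendsto_of_le_of_le tendsto_const_nhds
    (by simpa using hε.const_add m) (fun n => iInf₂_le _ (huA n))
    fun n => (huE n).le

/-- Existence of minimizers for nonlocal variational problems with `p > 2`, a coercive
Carathéodory integrand (no convexity assumed), and zero endpoint conditions imposed via
the continuous representative.  The energy is encoded as a lower integral of the
(nonnegative) integrand shifted by the coercivity constant `C₀`. -/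
theorem stmt8 (p : ℝ) (hp : 2 < p)
    (W : ℝ → ℝ → ℝ → ℝ)
    (hWx : ∀ a b : ℝ, Measurable fun x => W x a b)
    (hWc : ∀ x : ℝ, Continuous fun q : ℝ × ℝ => W x q.1 q.2)
    (C₀ : ℝ) (hC₀ : 0 < C₀)
    (hcoer : ∀ x a b : ℝ, C₀ * (|b| ^ p - 1) ≤ W x a b)
    (A : Set (ℝ → ℝ))
    (hA : A = {u : ℝ → ℝ | MemLp u (ENNReal.ofReal p) muI ∧
        MemLp (Du u) (ENNReal.ofReal p) muS ∧
        ∃ v : ℝ → ℝ, ContinuousOn v (Set.Icc 0 1) ∧ (∀ᵐ x ∂muI, v x = u x) ∧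
          v 0 = 0 ∧ v 1 = 0})
    (E : (ℝ → ℝ) → ℝ≥0∞)
    (hE : E = fun u => ∫⁻ z : ℝ × ℝ, ENNReal.ofReal (W z.1 (u z.1) (Du u z) + C₀) ∂muS)
    (hnontriv : ∃ u₀ ∈ A, E u₀ < ∞) :
    ∃ u ∈ A, ∀ v ∈ A, E u ≤ E v := by
  have hp₀ : 0 < p := by linarith
  replace hA : A = admissible p := hA
  replace hE : E = nonlocalEnergy W C₀ muS := hE
  subst hA hE
  obtain ⟨u, huA, huE, hlim⟩ := exists_seq_mem_tendsto_biInf hnontriv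
  set m := ⨅ a ∈ admissible p, nonlocalEnergy W C₀ muS a
  have hm : m ≠ ∞ := by
    obtain ⟨u₀, hu₀A, hu₀E⟩ := hnontriv
    exact ne_top_of_le_ne_top hu₀E.ne (iInf₂_le u₀ hu₀A)
  set K := (((m + 1) / ENNReal.ofReal C₀) ^ (1 / p)).toNNReal
  have hK : ∀ n, eLpNorm (Du (u n)) (ENNReal.ofReal p) muS ≤ K := fun n => by
    rw [ENNReal.coe_toNNReal (by finiteness)]
    exact (eLpNorm_Du_le_nonlocalEnergy hp₀ hC₀ hcoer muS (u n)).trans (by gcongr; exact huE n)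
  obtain ⟨w, hwA, φ, hφ, huw⟩ := exists_subseq_tendsto_ae_mem_admissible hp huA hK
  refine ⟨w, hwA, fun u' hu' => ?_⟩
  calc nonlocalEnergy W C₀ muS w ≤ liminf (fun n => nonlocalEnergy W C₀ muS (u (φ n))) atTop :=
        nonlocalEnergy_le_liminf hWx hWc C₀
          (fun n => (huA (φ n)).1.aestronglyMeasurable.aemeasurable) huw
    _ = m := (hlim.comp hφ.tendsto_atTop).liminf_eq
    _ ≤ nonlocalEnergy W C₀ muS u' := iInf₂_le u' hu'
end

section
/- Let u : (0,1) → ℝ be measurable with Du ∈ L^∞((0,1)²), i.e., there is M ≥ 0 with |u(X)−u(x)| ≤ M|X−x| for a.e. (x,X) ∈ (0,1)². Then u has a Lipschitz representative on (0,1) with Lipschitz constant M; hence NW^{1,∞}(0,1) coincides with the space of (essentially) Lipschitz functions and ‖Du‖_{L^∞((0,1)²)} equals the optimal Lipschitz constant. -/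
/-!
By Fubini, the a.e. bound on the square says that for a.e. `x` the bound holds against a.e. `X`.
For two such good points `x < y` the interval `(x, y)` has positive measure, so it contains an `X`
that is good for both, and the triangle inequality through `X` bounds `|u x - u y|`. Thus `u` is
`M`-Lipschitz on a conull set and McShane's extension gives the representative. Conversely a
Lipschitz representative bounds `Du` off the diagonal, which is null, so `‖Du‖_∞` is the least
Lipschitz constant of a representative.
-/

open MeasureTheory Set Real Filter Topology
open scoped ENNReal NNReal

section AEBoundToLipschitz

variable {E : Type*} [PseudoMetricSpace E] {s : Set ℝ} {K : ℝ≥0}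

lemma exists_mem_Ioo_of_ae_restrict {p : ℝ → Prop} {x y : ℝ} (hxy : x < y) (hs : Ioo x y ⊆ s)
    (hp : ∀ᵐ X ∂volume.restrict s, p X) : ∃ X ∈ Ioo x y, p X := by
  have : (ae (volume.restrict (Ioo x y))).NeBot := ae_restrict_neBot.2 (by simp [hxy])
  obtain ⟨X, hpX, hX⟩ :=
    ((ae_restrict_of_ae_restrict_of_subset hs hp).and (ae_restrict_mem measurableSet_Ioo)).exists
  exact ⟨X, hX, hpX⟩

lemma dist_le_mul_of_mem_Icc {u : ℝ → E} {x X y : ℝ} (hX : X ∈ Icc x y)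
    (hx : dist (u X) (u x) ≤ K * dist X x) (hy : dist (u X) (u y) ≤ K * dist X y) :
    dist (u x) (u y) ≤ K * dist x y := by
  have hsplit : dist x y = dist X x + dist X y := by
    simp only [Real.dist_eq, abs_of_nonneg (sub_nonneg.2 hX.1), abs_of_nonpos (sub_nonpos.2 hX.2),
      abs_of_nonpos (sub_nonpos.2 (hX.1.trans hX.2))]
    ring
  calc dist (u x) (u y) ≤ dist (u X) (u x) + dist (u X) (u y) := dist_triangle_left _ _ _
    _ ≤ K * dist X x + K * dist X y := add_le_add hx hy
    _ = K * dist x y := by rw [hsplit, mul_add]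

theorem exists_lipschitzOnWith_of_ae_prod [s.OrdConnected] {u : ℝ → E}
    (h : ∀ᵐ z ∂(volume.restrict s).prod (volume.restrict s),
      dist (u z.2) (u z.1) ≤ K * dist z.2 z.1) :
    ∃ A : Set ℝ, (∀ᵐ x ∂volume.restrict s, x ∈ A) ∧ LipschitzOnWith K u A := by
  let A := {x | x ∈ s ∧ ∀ᵐ X ∂volume.restrict s, dist (u X) (u x) ≤ K * dist X x}
  refine ⟨A, (ae_restrict_mem (OrdConnected.measurableSet ‹_›)).and
    (Measure.ae_ae_of_ae_prod h), LipschitzOnWith.of_dist_le_mul fun x hx y hy => ?_⟩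
  wlog hxy : x ≤ y generalizing x y
  · rw [dist_comm, dist_comm x]
    exact this y hy x hx (le_of_not_ge hxy)
  rcases hxy.eq_or_lt with rfl | hlt
  · simp
  obtain ⟨X, hX, hxX, hyX⟩ := exists_mem_Ioo_of_ae_restrict hlt
    (Ioo_subset_Icc_self.trans (Set.OrdConnected.out ‹_› hx.1 hy.1)) (hx.2.and hy.2)
  exact dist_le_mul_of_mem_Icc (Ioo_subset_Icc_self hX) hxX hyX

theorem exists_lipschitzWith_ae_eq_of_ae_prod [s.OrdConnected] {u : ℝ → ℝ}
    (h : ∀ᵐ z ∂(volume.restrict s).prod (volume.restrict s),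
      dist (u z.2) (u z.1) ≤ K * dist z.2 z.1) :
    ∃ v : ℝ → ℝ, v =ᵐ[volume.restrict s] u ∧ LipschitzWith K v := by
  obtain ⟨A, hA, hu⟩ := exists_lipschitzOnWith_of_ae_prod h
  obtain ⟨v, hv, hvu⟩ := hu.extend_real
  exact ⟨v, hA.mono fun x hx => (hvu hx).symm, hv⟩

end AEBoundToLipschitz

section DifferenceQuotient

lemma MeasureTheory.Measure.ae_prod_fst_ne_snd {α : Type*} [MeasurableSpace α] [MeasurableEq α]
    (μ ν : Measure α) [SFinite ν] [NullSingletonClass ν] : ∀ᵐ z ∂μ.prod ν, z.1 ≠ z.2 :=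
  (Measure.ae_prod_mem_iff_ae_ae_mem measurableSet_diagonal.compl).2
    (ae_of_all _ fun x => (ν.ae_ne x).mono fun _ hy => hy.symm)

lemma enorm_Du_le_iff {u : ℝ → ℝ} {z : ℝ × ℝ} (hz : z.1 ≠ z.2) {C : ℝ≥0∞} :
    ‖Du u z‖ₑ ≤ C ↔ edist (u z.2) (u z.1) ≤ C * edist z.2 z.1 := by
  have hne : z.2 - z.1 ≠ 0 := sub_ne_zero.2 hz.symm
  rw [edist_eq_enorm_sub, edist_eq_enorm_sub, ← div_mul_cancel₀ (u z.2 - u z.1) hne, enorm_mul,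
    ENNReal.mul_le_mul_iff_left (enorm_ne_zero.2 hne) enorm_ne_top]
  rfl

variable {s : Set ℝ}

theorem eLpNorm_Du_le_iff [s.OrdConnected] {u : ℝ → ℝ} {C : ℝ≥0∞} :
    eLpNorm (Du u) ∞ ((volume.restrict s).prod (volume.restrict s)) ≤ C ↔
      ∃ v : ℝ → ℝ, v =ᵐ[volume.restrict s] u ∧
        ∀ x ∈ s, ∀ y ∈ s, edist (v x) (v y) ≤ C * edist x y := by
  set μ := volume.restrict s
  rw [eLpNorm_exponent_top]
  constructor
  · intro hC
    induction C using ENNReal.recTopCoe with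
    | top =>
      refine ⟨u, .rfl, fun x _ y _ => ?_⟩
      rcases eq_or_ne x y with rfl | hxy
      · simp
      · simp [ENNReal.top_mul (edist_pos.2 hxy).ne']
    | coe K =>
      have h : ∀ᵐ z ∂μ.prod μ, dist (u z.2) (u z.1) ≤ K * dist z.2 z.1 := by
        filter_upwards [ae_le_eLpNormEssSup (f := Du u), Measure.ae_prod_fst_ne_snd μ μ]
          with z hz hne
        have hedist := (enorm_Du_le_iff hne).1 (hz.trans hC)
        rw [edist_nndist, edist_nndist, ← ENNReal.coe_mul, ENNReal.coe_le_coe] at hedist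
        exact_mod_cast hedist
      obtain ⟨v, hv, hlip⟩ := exists_lipschitzWith_ae_eq_of_ae_prod h
      exact ⟨v, hv, fun x _ y _ => hlip.edist_le_mul x y⟩
  · rintro ⟨v, hv, hvC⟩
    have hgood : ∀ᵐ x ∂μ, x ∈ s ∧ v x = u x :=
      (ae_restrict_mem (OrdConnected.measurableSet ‹_›)).and hv
    refine eLpNormEssSup_le_of_ae_enorm_bound ?_
    filter_upwards [Measure.quasiMeasurePreserving_fst.ae hgood,
      Measure.quasiMeasurePreserving_snd.ae hgood, Measure.ae_prod_fst_ne_snd μ μ]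
      with z ⟨h1, hv1⟩ ⟨h2, hv2⟩ hne
    rw [enorm_Du_le_iff hne, ← hv1, ← hv2]
    exact hvC _ h2 _ h1

end DifferenceQuotient

theorem stmt19_general (u : ℝ → ℝ)
    (M : ℝ) (hM : 0 ≤ M)
    (h : ∀ᵐ z ∂muS, |u z.2 - u z.1| ≤ M * |z.2 - z.1|) :
    (∃ v : ℝ → ℝ, (∀ᵐ x ∂muI, v x = u x) ∧
      ∀ x ∈ Set.Ioo (0:ℝ) 1, ∀ y ∈ Set.Ioo (0:ℝ) 1, |v x - v y| ≤ M * |x - y|) ∧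
    eLpNorm (Du u) ∞ muS
      = sInf {C : ℝ≥0∞ | ∃ v : ℝ → ℝ, (∀ᵐ x ∂muI, v x = u x) ∧
          ∀ x ∈ Set.Ioo (0:ℝ) 1, ∀ y ∈ Set.Ioo (0:ℝ) 1,
            ENNReal.ofReal |v x - v y| ≤ C * ENNReal.ofReal |x - y|} := by
  constructor
  · obtain ⟨v, hv, hlip⟩ := exists_lipschitzWith_ae_eq_of_ae_prod (K := ⟨M, hM⟩) h
    exact ⟨v, hv, fun x _ y _ => hlip.dist_le_mul x y⟩
  · refine csInf_Ici.symm.trans (congrArg sInf (Set.ext fun C => ?_))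
    rw [mem_Ici, muS, muI, eLpNorm_Du_le_iff]
    simp only [mem_ofPred_eq, edist_dist, Real.dist_eq]
    rfl

/-- If `|u(X)−u(x)| ≤ M|X−x|` for a.e. `(x,X) ∈ (0,1)²` (i.e. `Du ∈ L^∞` with bound
`M`), then `u` has a Lipschitz representative on `(0,1)` with Lipschitz constant `M`;
moreover `‖Du‖_{L^∞((0,1)²)}` equals the optimal Lipschitz constant of representatives. -/
theorem stmt19 (u : ℝ → ℝ) (hmeas : Measurable u)
    (M : ℝ) (hM : 0 ≤ M)
    (h : ∀ᵐ z ∂muS, |u z.2 - u z.1| ≤ M * |z.2 - z.1|) :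
    (∃ v : ℝ → ℝ, (∀ᵐ x ∂muI, v x = u x) ∧
      ∀ x ∈ Set.Ioo (0:ℝ) 1, ∀ y ∈ Set.Ioo (0:ℝ) 1, |v x - v y| ≤ M * |x - y|) ∧
    eLpNorm (Du u) ∞ muS
      = sInf {C : ℝ≥0∞ | ∃ v : ℝ → ℝ, (∀ᵐ x ∂muI, v x = u x) ∧
          ∀ x ∈ Set.Ioo (0:ℝ) 1, ∀ y ∈ Set.Ioo (0:ℝ) 1,
            ENNReal.ofReal |v x - v y| ≤ C * ENNReal.ofReal |x - y|} :=
  stmt19_general u M hM h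
end
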